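/- arXiv:2605.22062 — 2 statements merged into one kernel-verified Lean document; each statement's English description precedes it below -/
import Mathlib

section
/- In the same setup, for two disjoint distinct cyclic edges (sharing no vertex), Cov(Z_j, Z_k) = n(n+1)/90, using E[Z_jZ_k] = ((n-4)A_n² + 2B_n)/((n-1)(n-2)(n-3)). -/
open Filter

/-- Cyclic rank increment `D_k = (π_{k+1} - π_k) mod n` of the cyclic listing `σ`. -/
def cycD (n : ℕ) [NeZero n] (σ : Equiv.Perm (Fin n)) (k : Fin n) : ℕ :=
  ((σ (k + 1) - σ k : Fin n) : ℕ)

/-- The edge weight `Z_k = D_k (n - D_k)`. -/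
noncomputable def cycZ (n : ℕ) [NeZero n] (σ : Equiv.Perm (Fin n)) (k : Fin n) : ℝ :=
  (cycD n σ k : ℝ) * ((n : ℝ) - (cycD n σ k : ℝ))

/-- Expectation with respect to the uniform distribution on all `n!` cyclic listings. -/
noncomputable def permE (n : ℕ) (f : Equiv.Perm (Fin n) → ℝ) : ℝ :=
  (∑ σ : Equiv.Perm (Fin n), f σ) / (Nat.factorial n : ℝ)

/-
Write `w a b = gapWeight n (b - a)`, so that `Z_k = w (π k) (π (k+1))`. The symmetric group acts
transitively on injective `m`-tuples, so `(π j, π (j+1), π k, π (k+1))` is a uniformly random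
injective 4-tuple and `E[Z_j Z_k]` is the average of `w a b * w c d` over distinct `a, b, c, d`.
Every row and column of `w` sums to `A_n` and `w` vanishes on the diagonal, so by
inclusion–exclusion the sum of `w c d` over `c, d ∉ {a, b}` is `(n - 4) A_n + 2 w a b`; summing
against `w a b` gives `n ((n - 4) A_n² + 2 B_n)`. The same argument with pairs gives
`E[Z_k] = A_n / (n - 1) = n (n + 1) / 6`.
-/

open Finset Function

theorem MulAction.card_nsmul_sum_smul {G X M : Type*} [Group G] [Fintype G] [MulAction G X]
    [Fintype X] [MulAction.IsPretransitive G X] [AddCommMonoid M] (f : X → M) (x : X) :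
    Fintype.card X • ∑ g : G, f (g • x) = Fintype.card G • ∑ y, f y := by
  have orbit_sum_const : ∀ y : X, ∑ g : G, f (g • y) = ∑ g : G, f (g • x) := by
    intro y
    obtain ⟨τ, rfl⟩ := MulAction.exists_smul_eq G x y
    exact Fintype.sum_equiv (Equiv.mulRight τ) _ _ fun g => by simp [mul_smul]
  calc Fintype.card X • ∑ g : G, f (g • x) = ∑ y : X, ∑ g : G, f (g • y) := by
        simp [orbit_sum_const]
    _ = ∑ g : G, ∑ y, f (g • y) := Finset.sum_comm
    _ = ∑ _g : G, ∑ y, f y :=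
        Finset.sum_congr rfl fun g _ => Equiv.sum_comp (MulAction.toPerm g) f
    _ = Fintype.card G • ∑ y, f y := by rw [sum_const, card_univ]

theorem sum_embedding_eq_sum_injective {ι α M : Type*} [Fintype ι] [Fintype α] [DecidableEq ι]
    [DecidableEq α] [AddCommMonoid M] (f : (ι → α) → M) :
    ∑ v : ι ↪ α, f v = ∑ v : ι → α, if Injective v then f v else 0 := by
  rw [← Finset.sum_filter, Finset.sum_subtype _ (p := Injective) (fun v => by simp) f]
  exact Fintype.sum_equiv (Equiv.subtypeInjectiveEquivEmbedding ι α).symm _ _ fun _ => rfl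

theorem permE_comp_of_injective {n m : ℕ} {u : Fin m → Fin n} (hu : Injective u)
    (f : (Fin m → Fin n) → ℝ) :
    permE n (fun σ => f (σ ∘ u))
      = (∑ v : Fin m → Fin n, if Injective v then f v else 0) / n.descFactorial m := by
  have := Equiv.Perm.isMultiplyPretransitive (Fin n) m
  have h := MulAction.card_nsmul_sum_smul (G := Equiv.Perm (Fin n))
    (fun v : Fin m ↪ Fin n => f v) ⟨u, hu⟩
  rw [sum_embedding_eq_sum_injective, Fintype.card_embedding_eq, Fintype.card_perm,
    Fintype.card_fin, Fintype.card_fin, nsmul_eq_mul, nsmul_eq_mul] at h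
  change _ * ∑ σ : Equiv.Perm (Fin n), f (σ ∘ u) = _ at h
  have hm : m ≤ n := by simpa using Fintype.card_le_of_injective u hu
  have hD : (n.descFactorial m : ℝ) ≠ 0 := by
    exact_mod_cast mt Nat.descFactorial_eq_zero_iff_lt.mp (not_lt.mpr hm)
  rw [permE, div_eq_div_iff (by positivity) hD]
  linear_combination h

theorem cast_descFactorial_two {n : ℕ} (hn : 1 ≤ n) :
    (n.descFactorial 2 : ℝ) = n * (n - 1) := by
  simp [Nat.descFactorial_succ, Nat.cast_sub hn]
  ring

theorem cast_descFactorial_four {n : ℕ} (hn : 3 ≤ n) :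
    (n.descFactorial 4 : ℝ) = n * (n - 1) * (n - 2) * (n - 3) := by
  simp [Nat.descFactorial_succ, Nat.cast_sub hn, Nat.cast_sub (by omega : 2 ≤ n),
    Nat.cast_sub (by omega : 1 ≤ n)]
  ring

theorem sum_fin_succ_arrow {α M : Type*} [Fintype α] [AddCommMonoid M] {m : ℕ}
    (f : (Fin (m + 1) → α) → M) :
    ∑ v, f v = ∑ a, ∑ v : Fin m → α, f (Matrix.vecCons a v) := by
  rw [← Fintype.sum_prod_type']
  exact (Fintype.sum_equiv (Fin.consEquiv fun _ => α) _ _ fun _ => rfl).symm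

theorem sum_fin_two_arrow {α M : Type*} [Fintype α] [AddCommMonoid M]
    (f : (Fin 2 → α) → M) :
    ∑ v, f v = ∑ a, ∑ b, f ![a, b] := by
  simp only [sum_fin_succ_arrow, Fintype.sum_unique]
  rfl

theorem sum_fin_four_arrow {α M : Type*} [Fintype α] [AddCommMonoid M]
    (f : (Fin 4 → α) → M) :
    ∑ v, f v = ∑ a, ∑ b, ∑ c, ∑ d, f ![a, b, c, d] := by
  simp only [sum_fin_succ_arrow, Fintype.sum_unique]
  rfl

theorem injective_vecCons_iff {α : Type*} {m : ℕ} {a : α} {v : Fin m → α} :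
    Injective (Matrix.vecCons a v) ↔ a ∉ Set.range v ∧ Injective v :=
  Fin.cons_injective_iff

theorem sum_compl_sum_compl {α M : Type*} [Fintype α] [DecidableEq α] [AddCommGroup M]
    (s : Finset α) (w : α → α → M) :
    ∑ c ∈ sᶜ, ∑ d ∈ sᶜ, w c d = ∑ c, ∑ d, w c d - ∑ c ∈ s, ∑ d, w c d
      - ∑ d ∈ s, ∑ c, w c d + ∑ c ∈ s, ∑ d ∈ s, w c d := by
  have h (f : α → M) : ∑ i ∈ sᶜ, f i = ∑ i, f i - ∑ i ∈ s, f i :=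
    eq_sub_of_add_eq (sum_compl_add_sum s f)
  simp only [h, sum_sub_distrib]
  rw [sum_comm (s := univ) (t := s)]
  abel

section WeightSums

variable {α : Type*} [Fintype α] [DecidableEq α] {w : α → α → ℝ}

theorem sum_injective_two (hdiag : ∀ a, w a a = 0) :
    ∑ v : Fin 2 → α, (if Injective v then w (v 0) (v 1) else 0) = ∑ a, ∑ b, w a b := by
  rw [sum_fin_two_arrow]
  refine sum_congr rfl fun a _ => sum_congr rfl fun b _ => ?_
  rcases eq_or_ne a b with rfl | hab
  · simp [hdiag]
  · simp [injective_vecCons_iff, Matrix.range_cons, Matrix.range_empty,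
      injective_of_subsingleton, hab]

theorem sum_compl_pair_compl_pair (hdiag : ∀ a, w a a = 0) (hsymm : ∀ a b, w a b = w b a)
    {A : ℝ} (hrow : ∀ a, ∑ b, w a b = A) {a b : α} (hab : a ≠ b) :
    ∑ c ∈ {a, b}ᶜ, ∑ d ∈ {a, b}ᶜ, w c d = (Fintype.card α - 4) * A + 2 * w a b := by
  have hcol : ∀ b, ∑ a, w a b = A := fun b => by simpa only [hsymm _ b] using hrow b
  rw [sum_compl_sum_compl]
  simp only [sum_pair hab, hrow, hcol, hdiag, hsymm b a, sum_const, card_univ, nsmul_eq_mul]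
  ring

theorem sum_sum_injective_four_eq_mul_sum_compl (hdiag : ∀ a, w a a = 0) (a b : α) :
    ∑ c, ∑ d, (if Injective ![a, b, c, d] then w a b * w c d else 0)
      = w a b * ∑ c ∈ {a, b}ᶜ, ∑ d ∈ {a, b}ᶜ, w c d := by
  rcases eq_or_ne a b with rfl | hab
  · simp [hdiag]
  calc ∑ c, ∑ d, (if Injective ![a, b, c, d] then w a b * w c d else 0)
      = ∑ c, if c ∈ ({a, b} : Finset α)ᶜ then
          ∑ d, (if d ∈ ({a, b} : Finset α)ᶜ then w a b * w c d else 0) else 0 := by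
        refine sum_congr rfl fun c _ => ?_
        rw [ite_sum_zero]
        refine sum_congr rfl fun d _ => ?_
        rcases eq_or_ne c d with rfl | hcd
        · simp [hdiag]
        · simp [injective_vecCons_iff, Matrix.range_cons, Matrix.range_empty,
            injective_of_subsingleton, hab, hcd]
          split_ifs <;> grind
    _ = w a b * ∑ c ∈ {a, b}ᶜ, ∑ d ∈ {a, b}ᶜ, w c d := by
        simp only [Fintype.sum_ite_mem, mul_sum]

theorem sum_injective_four (hdiag : ∀ a, w a a = 0) (hsymm : ∀ a b, w a b = w b a) {A : ℝ}
    (hrow : ∀ a, ∑ b, w a b = A) :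
    ∑ v : Fin 4 → α, (if Injective v then w (v 0) (v 1) * w (v 2) (v 3) else 0)
      = (Fintype.card α - 4) * Fintype.card α * A ^ 2 + 2 * ∑ a, ∑ b, w a b ^ 2 := by
  calc ∑ v : Fin 4 → α, (if Injective v then w (v 0) (v 1) * w (v 2) (v 3) else 0)
      = ∑ a, ∑ b, w a b * ∑ c ∈ {a, b}ᶜ, ∑ d ∈ {a, b}ᶜ, w c d := by
        rw [sum_fin_four_arrow]
        exact sum_congr rfl fun a _ => sum_congr rfl fun b _ =>
          sum_sum_injective_four_eq_mul_sum_compl hdiag a b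
    _ = ∑ a, ∑ b, (w a b * ((Fintype.card α - 4) * A) + 2 * w a b ^ 2) := by
        refine sum_congr rfl fun a _ => sum_congr rfl fun b _ => ?_
        rcases eq_or_ne a b with rfl | hab
        · simp [hdiag]
        · rw [sum_compl_pair_compl_pair hdiag hsymm hrow hab]
          ring
    _ = (Fintype.card α - 4) * Fintype.card α * A ^ 2 + 2 * ∑ a, ∑ b, w a b ^ 2 := by
        simp only [sum_add_distrib, ← sum_mul, ← mul_sum, hrow, sum_const, card_univ,
          nsmul_eq_mul]
        ring

end WeightSums

theorem sum_range_mul_sub (m : ℕ) (N : ℝ) :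
    ∑ i ∈ range m, (i : ℝ) * (N - i)
      = N * m * (m - 1) / 2 - m * (m - 1) * (2 * m - 1) / 6 := by
  induction m with
  | zero => simp
  | succ m ih => rw [sum_range_succ, ih]; push_cast; ring

theorem sum_range_mul_sub_sq (m : ℕ) (N : ℝ) :
    ∑ i ∈ range m, ((i : ℝ) * (N - i)) ^ 2 = N ^ 2 * m * (m - 1) * (2 * m - 1) / 6
      - N * (m * (m - 1)) ^ 2 / 2 + m * (m - 1) * (2 * m - 1) * (3 * m ^ 2 - 3 * m - 1) / 30 := by
  induction m with
  | zero => simp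
  | succ m ih => rw [sum_range_succ, ih]; push_cast; ring

def gapWeight (n : ℕ) (d : Fin n) : ℝ := (d : ℕ) * ((n : ℝ) - (d : ℕ))

section gapWeight

variable {n : ℕ}

theorem cycZ_eq_gapWeight [NeZero n] (σ : Equiv.Perm (Fin n)) (k : Fin n) :
    cycZ n σ k = gapWeight n (σ (k + 1) - σ k) := rfl

@[simp] theorem gapWeight_zero [NeZero n] : gapWeight n 0 = 0 := by simp [gapWeight]

theorem gapWeight_neg [NeZero n] (d : Fin n) : gapWeight n (-d) = gapWeight n d := by
  rcases eq_or_ne d 0 with rfl | hd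
  · simp
  · have hlt : (d : ℕ) < n := d.isLt
    simp only [gapWeight, Fin.val_neg, hd, if_false]
    push_cast [hlt.le]
    ring

theorem sum_gapWeight : ∑ d : Fin n, gapWeight n d = n * ((n : ℝ) ^ 2 - 1) / 6 := by
  rw [show ∑ d : Fin n, gapWeight n d = ∑ i ∈ range n, (i : ℝ) * (n - i) from
    Fin.sum_univ_eq_sum_range (fun i => (i : ℝ) * (n - i)) n, sum_range_mul_sub]
  ring

theorem sum_gapWeight_sq : ∑ d : Fin n, gapWeight n d ^ 2 = n * ((n : ℝ) ^ 4 - 1) / 30 := by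
  rw [show ∑ d : Fin n, gapWeight n d ^ 2 = ∑ i ∈ range n, ((i : ℝ) * (n - i)) ^ 2 from
    Fin.sum_univ_eq_sum_range (fun i => ((i : ℝ) * (n - i)) ^ 2) n, sum_range_mul_sub_sq]
  ring

theorem sum_gapWeight_sub_right [NeZero n] (a : Fin n) :
    ∑ b, gapWeight n (b - a) = n * ((n : ℝ) ^ 2 - 1) / 6 :=
  (Equiv.sum_comp (Equiv.subRight a) (gapWeight n)).trans sum_gapWeight

theorem sum_sum_gapWeight_sub_sq [NeZero n] :
    ∑ a : Fin n, ∑ b, gapWeight n (b - a) ^ 2 = n * (n * ((n : ℝ) ^ 4 - 1) / 30) := by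
  have hrow (a : Fin n) : ∑ b, gapWeight n (b - a) ^ 2 = n * ((n : ℝ) ^ 4 - 1) / 30 :=
    (Equiv.sum_comp (Equiv.subRight a) (fun d => gapWeight n d ^ 2)).trans sum_gapWeight_sq
  simp [hrow]

end gapWeight

theorem permE_cycZ {n : ℕ} [NeZero n] (hn : 1 < n) (k : Fin n) :
    permE n (fun σ => cycZ n σ k) = n * (n + 1) / 6 := by
  have hu : Injective ![k, k + 1] := by
    simp [injective_vecCons_iff, Matrix.range_cons, Matrix.range_empty, injective_of_subsingleton,
      Fin.one_eq_zero_iff]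
    omega
  have h := permE_comp_of_injective hu (fun v => gapWeight n (v 1 - v 0))
  rw [sum_injective_two (w := fun a b => gapWeight n (b - a)) (by simp)] at h
  simp only [sum_gapWeight_sub_right, sum_const, card_univ, Fintype.card_fin, nsmul_eq_mul,
    cast_descFactorial_two hn.le] at h
  have hn' : (n : ℝ) - 1 ≠ 0 := sub_ne_zero.mpr (by exact_mod_cast hn.ne')
  simp only [cycZ_eq_gapWeight]
  refine h.trans ?_
  field_simp
  ring

theorem permE_cycZ_mul_cycZ {n : ℕ} [NeZero n] (hn : 4 ≤ n) {j k : Fin n}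
    (hdisj : k ≠ j ∧ k ≠ j + 1 ∧ k + 1 ≠ j) :
    permE n (fun σ => cycZ n σ j * cycZ n σ k)
      = ((n - 4) * (n * ((n : ℝ) ^ 2 - 1) / 6) ^ 2 + 2 * (n * ((n : ℝ) ^ 4 - 1) / 30))
        / ((n - 1) * (n - 2) * (n - 3)) := by
  obtain ⟨hkj, hkj1, hk1j⟩ := hdisj
  have hu : Injective ![j, j + 1, k, k + 1] := by
    simp [injective_vecCons_iff, Matrix.range_cons, Matrix.range_empty, injective_of_subsingleton,
      Fin.one_eq_zero_iff]
    exact ⟨⟨Ne.symm hk1j, Ne.symm hkj, by omega⟩, ⟨Ne.symm hkj, Ne.symm hkj1⟩, by omega⟩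
  have h := permE_comp_of_injective hu
    (fun v => gapWeight n (v 1 - v 0) * gapWeight n (v 3 - v 2))
  rw [sum_injective_four (w := fun a b => gapWeight n (b - a)) (by simp)
    (fun a b => by rw [← neg_sub, gapWeight_neg]) sum_gapWeight_sub_right] at h
  simp only [sum_sum_gapWeight_sub_sq, Fintype.card_fin,
    cast_descFactorial_four (by omega : 3 ≤ n)] at h
  have h1 : (n : ℝ) - 1 ≠ 0 := sub_ne_zero.mpr (by norm_cast; omega)
  have h2 : (n : ℝ) - 2 ≠ 0 := sub_ne_zero.mpr (by norm_cast; omega)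
  have h3 : (n : ℝ) - 3 ≠ 0 := sub_ne_zero.mpr (by norm_cast; omega)
  simp only [cycZ_eq_gapWeight]
  refine h.trans ?_
  field_simp

/-- for a uniformly random cyclic listing of `{0,...,n-1}`, the covariance
of the weights of two disjoint cyclic edges (sharing no vertex) equals `n(n+1)/90`. -/
theorem stmt12 (n : ℕ) [NeZero n] (hn : 5 ≤ n) (j k : Fin n)
    (hdisj : k ≠ j ∧ k ≠ j + 1 ∧ k + 1 ≠ j) :
    permE n (fun σ => cycZ n σ j * cycZ n σ k)
      - permE n (fun σ => cycZ n σ j) * permE n (fun σ => cycZ n σ k)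
      = (n : ℝ) * ((n : ℝ) + 1) / 90 := by
  rw [permE_cycZ_mul_cycZ (by omega) hdisj, permE_cycZ (by omega), permE_cycZ (by omega)]
  have h1 : (n : ℝ) - 1 ≠ 0 := sub_ne_zero.mpr (by norm_cast; omega)
  have h2 : (n : ℝ) - 2 ≠ 0 := sub_ne_zero.mpr (by norm_cast; omega)
  have h3 : (n : ℝ) - 3 ≠ 0 := sub_ne_zero.mpr (by norm_cast; omega)
  field_simp
  ring
end

section
/- Let g ∈ L²(𝕋) and let S₁,...,Sₙ be i.i.d. uniform on 𝕋 with N(i) denoting the index of the clockwise successor of S_i among the sample. If g is continuous, then Bₙ = (1/n) ∑ᵢ g(S_{N(i)}) · conj(g(S_i)) converges almost surely to ∫_𝕋 |g(s)|² ds. -/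
/-!
Almost surely the sample is dense in the circle, so by compactness the first `M` sample points
are a `δ/2`-net for some `M`; from then on every clockwise successor gap is below `δ`.
Uniform continuity of `(x, y) ↦ g y · conj (g x)`, which equals `|g x|²` on the diagonal, then
makes `Bₙ` uniformly close to the empirical mean of `|g(Sᵢ)|²`, which converges to `∫ |g|²` by
the strong law of large numbers.
-/

open MeasureTheory Filter

noncomputable def frac (x : UnitAddCircle) : ℝ := (AddCircle.equivIco 1 0 x : ℝ)

open ProbabilityTheory Topology

section Sampling

variable {Ω X : Type*} [MeasurableSpace Ω] [MeasurableSpace X] {P : Measure Ω}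
  {μ : Measure X} {S : ℕ → Ω → X}

theorem ae_exists_mem_of_iIndepFun [IsProbabilityMeasure P] (hmeas : ∀ i, Measurable (S i))
    (hindep : iIndepFun S P) (hlaw : ∀ i, P.map (S i) = μ) {A : Set X} (hA : MeasurableSet A)
    (hμA : μ A ≠ 0) :
    ∀ᵐ ω ∂P, ∃ m, S m ω ∈ A := by
  have : IsProbabilityMeasure μ :=
    hlaw 0 ▸ Measure.isProbabilityMeasure_map (hmeas 0).aemeasurable
  have hmiss : ∀ m, P (S m ⁻¹' Aᶜ) = μ Aᶜ := fun m => by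
    rw [← hlaw m, Measure.map_apply (hmeas m) hA.compl]
  have hμAc : μ Aᶜ < 1 := by
    rw [prob_compl_eq_one_sub hA]
    exact ENNReal.sub_lt_self ENNReal.one_ne_top one_ne_zero hμA
  have hbound (n : ℕ) : P (⋂ m, S m ⁻¹' Aᶜ) ≤ μ Aᶜ ^ n :=
    calc P (⋂ m, S m ⁻¹' Aᶜ) ≤ P (⋂ m ∈ Finset.range n, S m ⁻¹' Aᶜ) :=
          measure_mono fun ω hω => Set.mem_iInter₂.2 fun m _ => Set.mem_iInter.1 hω m
      _ = ∏ m ∈ Finset.range n, P (S m ⁻¹' Aᶜ) :=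
          hindep.measure_inter_preimage_eq_mul _ fun _ _ => hA.compl
      _ = μ Aᶜ ^ n := by simp only [hmiss, Finset.prod_const, Finset.card_range]
  have hnever : P (⋂ m, S m ⁻¹' Aᶜ) = 0 :=
    le_antisymm (ge_of_tendsto' (ENNReal.tendsto_pow_atTop_nhds_zero_of_lt_one hμAc) hbound)
      bot_le
  rw [ae_iff]
  convert hnever using 2
  ext ω
  simp

theorem ae_denseRange_of_iIndepFun [IsProbabilityMeasure P] [TopologicalSpace X]
    [SecondCountableTopology X] [OpensMeasurableSpace X] [μ.IsOpenPosMeasure]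
    (hmeas : ∀ i, Measurable (S i)) (hindep : iIndepFun S P) (hlaw : ∀ i, P.map (S i) = μ) :
    ∀ᵐ ω ∂P, DenseRange (S · ω) := by
  have hbasis := TopologicalSpace.isBasis_countableBasis X
  have hhit : ∀ᵐ ω ∂P, ∀ o ∈ TopologicalSpace.countableBasis X, o.Nonempty →
      ∃ m, S m ω ∈ o := by
    refine (ae_ball_iff (TopologicalSpace.countable_countableBasis X)).2 fun o ho => ?_
    by_cases hne : o.Nonempty
    · have hopen := hbasis.isOpen ho
      filter_upwards [ae_exists_mem_of_iIndepFun hmeas hindep hlaw hopen.measurableSet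
        (hopen.measure_ne_zero μ hne)] with ω hω using fun _ => hω
    · exact Eventually.of_forall fun _ h => absurd h hne
  filter_upwards [hhit] with ω hω
  refine hbasis.dense_iff.2 fun o ho hne => ?_
  obtain ⟨m, hm⟩ := hω o ho hne
  exact ⟨S m ω, hm, m, rfl⟩

theorem ae_tendsto_average_comp_of_pairwise_indepFun (hmeas : ∀ i, Measurable (S i))
    (hindep : Pairwise fun i j => IndepFun (S i) (S j) P) (hlaw : ∀ i, P.map (S i) = μ)
    {f : X → ℝ} (hf : Measurable f) (hfμ : Integrable f μ) :
    ∀ᵐ ω ∂P, Tendsto (fun n : ℕ => (n : ℝ)⁻¹ • ∑ i ∈ Finset.range n, f (S i ω)) atTop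
      (𝓝 (∫ x, f x ∂μ)) := by
  have hint : Integrable (f ∘ S 0) P := by
    rw [← hlaw 0] at hfμ
    exact hfμ.comp_measurable (hmeas 0)
  have hident (i : ℕ) : IdentDistrib (f ∘ S i) (f ∘ S 0) P P :=
    IdentDistrib.comp ⟨(hmeas i).aemeasurable, (hmeas 0).aemeasurable, by rw [hlaw i, hlaw 0]⟩ hf
  have hmean : ∫ ω, (f ∘ S 0) ω ∂P = ∫ x, f x ∂μ := by
    rw [← hlaw 0, integral_map (hmeas 0).aemeasurable hf.aestronglyMeasurable]
    rfl
  rw [← hmean]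
  exact strong_law_ae (fun i => f ∘ S i) hint
    (fun i j hij => (hindep hij).comp hf hf) hident

end Sampling

theorem DenseRange.exists_forall_exists_dist_lt {X : Type*} [PseudoMetricSpace X]
    [CompactSpace X] {s : ℕ → X} (hs : DenseRange s) {ε : ℝ} (hε : 0 < ε) :
    ∃ M, ∀ x, ∃ m < M, dist (s m) x < ε := by
  obtain ⟨t, ht⟩ := isCompact_univ.elim_finite_subcover (fun m => Metric.ball (s m) ε)
    (fun _ => Metric.isOpen_ball) fun x _ => by
      obtain ⟨m, hm⟩ := hs.exists_dist_lt x hε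
      exact Set.mem_iUnion.2 ⟨m, hm⟩
  refine ⟨t.sup id + 1, fun x => ?_⟩
  obtain ⟨m, hmt, hm⟩ := Set.mem_iUnion₂.1 (ht (Set.mem_univ x))
  exact ⟨m, Nat.lt_succ_of_le (t.le_sup (f := id) hmt), Metric.mem_ball'.1 hm⟩

theorem tendsto_average_of_eventually_norm_sub_le {𝕜 : Type*} [RCLike 𝕜] {a : ℕ → ℕ → 𝕜}
    {b : ℕ → 𝕜} {L : 𝕜}
    (hb : Tendsto (fun n : ℕ => (1 / (n : 𝕜)) * ∑ i ∈ Finset.range n, b i) atTop (𝓝 L))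
    (hab : ∀ ε > 0, ∀ᶠ n in atTop, ∀ i < n, ‖a n i - b i‖ ≤ ε) :
    Tendsto (fun n : ℕ => (1 / (n : 𝕜)) * ∑ i ∈ Finset.range n, a n i) atTop (𝓝 L) := by
  have hdiff : Tendsto (fun n : ℕ => (1 / (n : 𝕜)) * ∑ i ∈ Finset.range n, (a n i - b i))
      atTop (𝓝 0) := by
    refine Metric.tendsto_nhds.2 fun ε hε => ?_
    filter_upwards [hab (ε / 2) (half_pos hε), eventually_gt_atTop 0] with n hn hn₀
    rw [dist_zero_right, norm_mul, norm_div, norm_one, RCLike.norm_natCast]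
    calc 1 / (n : ℝ) * ‖∑ i ∈ Finset.range n, (a n i - b i)‖
        ≤ 1 / (n : ℝ) * (n * (ε / 2)) := by
          gcongr
          simpa using norm_sum_le_of_le (Finset.range n) fun i hi => hn i (Finset.mem_range.1 hi)
      _ < ε := by
          rw [← mul_assoc, one_div_mul_cancel (by positivity)]
          linarith
  simpa [mul_sub, Finset.sum_sub_distrib] using hdiff.add hb

theorem frac_coe (x : ℝ) : frac (x : UnitAddCircle) = Int.fract x := by
  simp [frac, AddCircle.coe_equivIco_mk_apply]

theorem coe_frac (z : UnitAddCircle) : ((frac z : ℝ) : UnitAddCircle) = z :=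
  (AddCircle.equivIco 1 0).symm_apply_apply z

theorem frac_nonneg (z : UnitAddCircle) : 0 ≤ frac z :=
  (AddCircle.equivIco 1 0 z).2.1

theorem frac_zero : frac 0 = 0 := by
  simpa using frac_coe 0

theorem norm_le_frac (z : UnitAddCircle) : ‖z‖ ≤ frac z := by
  conv_lhs => rw [← coe_frac z]
  exact QuotientAddGroup.norm_mk_le_norm.trans_eq (abs_of_nonneg (frac_nonneg z))

theorem exists_coe_eq_abs_lt_of_norm_lt {w : UnitAddCircle} {r : ℝ} (hw : ‖w‖ < r) :
    ∃ u : ℝ, |u| < r ∧ (u : UnitAddCircle) = w := by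
  refine ⟨frac w - round (frac w), ?_, ?_⟩
  · rwa [← UnitAddCircle.norm_eq, coe_frac]
  · rw [AddCircle.coe_sub, coe_frac, sub_eq_self, AddCircle.coe_eq_zero_iff]
    exact ⟨round (frac w), by simp⟩

theorem exists_frac_sub_mem_Ioo {s : ℕ → UnitAddCircle} {M : ℕ} {δ : ℝ} (hδ : δ ≤ 1)
    (hs : ∀ x, ∃ m < M, dist (s m) x < δ / 2) (x : UnitAddCircle) :
    ∃ m < M, frac (s m - x) ∈ Set.Ioo 0 δ := by
  -- a sample point within `δ / 2` of `x + δ / 2` lies clockwise of `x` at arc length in `(0, δ)`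
  obtain ⟨m, hmM, hm⟩ := hs (x + (δ / 2 : ℝ))
  rw [dist_eq_norm] at hm
  obtain ⟨u, hu, hsm⟩ := exists_coe_eq_abs_lt_of_norm_lt hm
  have hsub : s m - x = ((δ / 2 + u : ℝ) : UnitAddCircle) := by
    rw [AddCircle.coe_add, hsm]; abel
  obtain ⟨hu₁, hu₂⟩ := abs_lt.1 hu
  refine ⟨m, hmM, ?_⟩
  rw [hsub, frac_coe, Int.fract_eq_self.2 ⟨by linarith, by linarith⟩]
  constructor <;> linarith

theorem eventually_forall_dist_successor_lt {s : ℕ → UnitAddCircle} (hs : DenseRange s)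
    {ν : ℕ → ℕ → ℕ} (hν : ∀ n, 2 ≤ n → ∀ i < n, ∀ j < n, j ≠ i →
      frac (s (ν n i) - s i) ≤ frac (s j - s i)) {δ : ℝ} (hδ : 0 < δ) :
    ∀ᶠ n in atTop, ∀ i < n, dist (s (ν n i)) (s i) < δ := by
  obtain ⟨M, hM⟩ := hs.exists_forall_exists_dist_lt (half_pos (lt_min hδ one_pos))
  filter_upwards [eventually_ge_atTop M] with n hn i hi
  obtain ⟨m, hmM, hm₀, hmδ⟩ := exists_frac_sub_mem_Ioo (min_le_right δ 1) hM (s i)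
  have hmi : m ≠ i := by
    rintro rfl
    rw [sub_self, frac_zero] at hm₀
    exact hm₀.false
  calc dist (s (ν n i)) (s i) ≤ frac (s (ν n i) - s i) :=
        (dist_eq_norm _ _).trans_le (norm_le_frac _)
    _ ≤ frac (s m - s i) := hν n (by omega) i hi m (by omega) hmi
    _ < δ := hmδ.trans_le (min_le_left δ 1)

/-- for `g : 𝕋 → ℂ` continuous and `S₁,...,Sₙ` i.i.d. uniform on the circle,
with `N(i)` the clockwise successor index of `Sᵢ` in the sample, the average
`Bₙ = (1/n) ∑ᵢ g(S_{N(i)}) conj(g(Sᵢ))` converges almost surely to `∫ |g|²`. -/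
theorem stmt19 {Ω : Type*} [MeasurableSpace Ω] (P : Measure Ω) [IsProbabilityMeasure P]
    (S : ℕ → Ω → UnitAddCircle) (hmeas : ∀ i, Measurable (S i))
    (hindep : ProbabilityTheory.iIndepFun S P)
    (hlaw : ∀ i, P.map (S i) = volume)
    (g : UnitAddCircle → ℂ) (hg : Continuous g)
    (N : ℕ → Ω → ℕ → ℕ)
    (hN : ∀ᵐ ω ∂P, ∀ n, 2 ≤ n → ∀ i < n,
      N n ω i < n ∧ N n ω i ≠ i ∧
        ∀ j < n, j ≠ i → frac (S (N n ω i) ω - S i ω) ≤ frac (S j ω - S i ω)) :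
    ∀ᵐ ω ∂P, Tendsto
      (fun n : ℕ => (1 / (n : ℂ)) *
        ∑ i ∈ Finset.range n, g (S (N n ω i) ω) * (starRingEnd ℂ) (g (S i ω)))
      atTop (nhds ((∫ s, ‖g s‖ ^ 2 : ℝ) : ℂ)) := by
  have hg2 : Continuous fun s => ‖g s‖ ^ 2 := by fun_prop
  have hslln := ae_tendsto_average_comp_of_pairwise_indepFun hmeas
    (fun _ _ hij => hindep.indepFun hij) hlaw hg2.measurable
    (hg2.integrable_of_hasCompactSupport (isClosed_tsupport _).isCompact)
  filter_upwards [hslln, ae_denseRange_of_iIndepFun hmeas hindep hlaw, hN] with ω hL hdense hNω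
  have hφ : UniformContinuous fun p : UnitAddCircle × UnitAddCircle =>
      g p.2 * starRingEnd ℂ (g p.1) :=
    CompactSpace.uniformContinuous_of_continuous (by fun_prop)
  refine tendsto_average_of_eventually_norm_sub_le
    (b := fun i => g (S i ω) * starRingEnd ℂ (g (S i ω))) ?_ fun ε hε => ?_
  · convert (Complex.continuous_ofReal.tendsto _).comp hL using 1
    ext n
    simp [RCLike.mul_conj, Finset.mul_sum, div_eq_inv_mul]
  · obtain ⟨δ, hδ, hφδ⟩ := Metric.uniformContinuous_iff.1 hφ ε hε
    filter_upwards [eventually_forall_dist_successor_lt hdense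
      (fun n hn i hi => (hNω n hn i hi).2.2) hδ] with n hn i hi
    rw [← dist_eq_norm]
    refine (hφδ (a := (S i ω, S (N n ω i) ω)) (b := (S i ω, S i ω)) ?_).le
    simpa [Prod.dist_eq] using hn i hi
end
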